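/- For n ≥ 3, the group Iso(n) of isometries of the metric space (Sym(n), d_H) is isomorphic to the semidirect product (Sym(n) × Sym(n)) ⋊ Z/2Z, where the nontrivial element of Z/2Z acts on Sym(n) × Sym(n) by swapping the two factors. -/

import Mathlib

/-!
Composing with the isometries `φ ↦ a * φ * b⁻¹` and `φ ↦ φ⁻¹`, it suffices to show that an
isometry `t` fixing `1` is `φ ↦ a * φ * a⁻¹` or `φ ↦ a * φ⁻¹ * a⁻¹`. Such a `t` preserves
`|supp φ| = d(φ, 1)`, so it permutes the transpositions, and two transpositions are at
distance 3 exactly when they share a point. The images of the transpositions `(i j)`, `j ≠ i`,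
have a common point `a i`: otherwise three of them would form a triangle `(p q), (q r), (r p)`,
and the preimage of the 3-cycle `(p q r)` would have a 3-element support containing four
points. Thus `t (swap i j) = swap (a i) (a j)`, and after conjugating by `a` we may assume that
`t` fixes every transposition. Then `t` maps each 3-cycle to itself or to its inverse; the
distances between 3-cycles sharing two points (3, but 4 for the reversed one) make the choice
uniform, and after composing with inversion `t` fixes every 3-cycle. A permutation is
determined by its distances to `1`, the transpositions and the 3-cycles, so `t = 1`.
-/

/-- The Hamming distance between two permutations of `Fin n`. -/
def hdist {n : ℕ} (φ ψ : Equiv.Perm (Fin n)) : ℕ :=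
  (Finset.univ.filter fun i => φ i ≠ ψ i).card

/-- The isometry group `Iso(n)` of the metric space `(Sym(n), d_H)`, as the subgroup of
the group of bijections of `Sym(n)` consisting of the Hamming-distance-preserving ones. -/
def IsoGroup (n : ℕ) : Subgroup (Equiv.Perm (Equiv.Perm (Fin n))) where
  carrier := { t | ∀ φ ψ, hdist (t φ) (t ψ) = hdist φ ψ }
  one_mem' := fun _ _ => rfl
  mul_mem' := by
    intro a b ha hb φ ψ
    simpa [Equiv.Perm.mul_apply] using (ha (b φ) (b ψ)).trans (hb φ ψ)
  inv_mem' := by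
    intro a ha φ ψ
    have := ha (a⁻¹ φ) (a⁻¹ ψ)
    simpa [Equiv.Perm.coe_inv, Equiv.apply_symm_apply] using this.symm

/-- The automorphism of `Sym(n) × Sym(n)` swapping the two factors. -/
def swapFactors (n : ℕ) : MulAut (Equiv.Perm (Fin n) × Equiv.Perm (Fin n)) :=
  (MulEquiv.prodComm :
    (Equiv.Perm (Fin n) × Equiv.Perm (Fin n)) ≃* (Equiv.Perm (Fin n) × Equiv.Perm (Fin n)))

/-- The action of `Z/2Z` on `Sym(n) × Sym(n)` whose nontrivial element swaps the
two factors. -/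
def swapHom (n : ℕ) :
    Multiplicative (ZMod 2) →* MulAut (Equiv.Perm (Fin n) × Equiv.Perm (Fin n)) where
  toFun k := if k.toAdd = 0 then 1 else swapFactors n
  map_one' := by simp
  map_mul' a b := by
    have hsq : swapFactors n * swapFactors n = 1 := by ext x <;> rfl
    have h : ∀ x : ZMod 2, x = 0 ∨ x = 1 := by decide
    rcases h a.toAdd with ha | ha <;> rcases h b.toAdd with hb | hb <;>
      simp [toAdd_mul, ha, hb, hsq, show (1 + 1 : ZMod 2) = 0 from by decide,
        show (1 : ZMod 2) ≠ 0 from by decide]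

open Equiv Finset

section hdist

variable {n : ℕ}

theorem hdist_eq_card_support (φ ψ : Perm (Fin n)) : hdist φ ψ = #(ψ⁻¹ * φ).support := by
  unfold hdist
  congr 1
  ext i
  rw [mem_filter, Perm.mem_support, Perm.mul_apply, Ne, Ne, Perm.inv_eq_iff_eq, eq_comm]
  simp

theorem hdist_one_right (φ : Perm (Fin n)) : hdist φ 1 = #φ.support := by
  simp [hdist_eq_card_support]

theorem hdist_mul_left (a φ ψ : Perm (Fin n)) : hdist (a * φ) (a * ψ) = hdist φ ψ := by
  simp [hdist]

theorem hdist_mul_right (a φ ψ : Perm (Fin n)) : hdist (φ * a) (ψ * a) = hdist φ ψ := by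
  rw [hdist_eq_card_support, hdist_eq_card_support,
    show (ψ * a)⁻¹ * (φ * a) = a⁻¹ * (ψ⁻¹ * φ) * a⁻¹⁻¹ by group, Perm.support_conj, card_map]

theorem hdist_inv_inv (φ ψ : Perm (Fin n)) : hdist φ⁻¹ ψ⁻¹ = hdist φ ψ := by
  rw [hdist_eq_card_support, hdist_eq_card_support, inv_inv, ← Perm.support_inv,
    show (ψ * φ⁻¹)⁻¹ = ψ * (ψ⁻¹ * φ) * ψ⁻¹ by group, Perm.support_conj, card_map]

theorem card_le_hdist {φ ψ : Perm (Fin n)} {s : Finset (Fin n)} (h : ∀ i ∈ s, φ i ≠ ψ i) :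
    #s ≤ hdist φ ψ :=
  card_le_card fun i hi => mem_filter.mpr ⟨mem_univ i, h i hi⟩

theorem card_support_add_card_support_le (φ ψ : Perm (Fin n)) :
    #φ.support + #ψ.support ≤ hdist φ ψ + 2 * #(φ.support ∩ ψ.support) := by
  have hdisj : Disjoint (φ.support \ ψ.support) (ψ.support \ φ.support) :=
    disjoint_sdiff_sdiff
  have hle : #(φ.support \ ψ.support ∪ ψ.support \ φ.support) ≤ hdist φ ψ := by
    refine card_le_hdist fun i hi => ?_
    rcases mem_union.mp hi with hi | hi <;> simp only [mem_sdiff, Perm.mem_support, not_not] at hi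
    · rw [hi.2]; exact hi.1
    · rw [hi.2]; exact Ne.symm hi.1
  rw [card_union_of_disjoint hdisj, card_sdiff, card_sdiff, inter_comm ψ.support] at hle
  have := card_le_card (inter_subset_left (s₁ := φ.support) (s₂ := ψ.support))
  have := card_le_card (inter_subset_right (s₁ := φ.support) (s₂ := ψ.support))
  omega

end hdist

section threeCycle

variable {α : Type*} [DecidableEq α]

/-- The cycle `a ↦ b ↦ c ↦ a`. -/
def threeCycle (a b c : α) : Perm α := swap a b * swap b c

variable {a b c p q x : α}

theorem threeCycle_apply_left (hab : a ≠ b) (hac : a ≠ c) : threeCycle a b c a = b := by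
  simp [threeCycle, swap_apply_of_ne_of_ne hab hac]

theorem threeCycle_apply_mid (hac : a ≠ c) (hbc : b ≠ c) : threeCycle a b c b = c := by
  simp [threeCycle, swap_apply_of_ne_of_ne hac.symm hbc.symm]

theorem threeCycle_apply_right : threeCycle a b c c = a := by
  simp [threeCycle]

theorem threeCycle_apply_of_ne (hxa : x ≠ a) (hxb : x ≠ b) (hxc : x ≠ c) :
    threeCycle a b c x = x := by
  simp [threeCycle, swap_apply_of_ne_of_ne, *]

theorem threeCycle_rotate (hab : a ≠ b) (hac : a ≠ c) (hbc : b ≠ c) :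
    threeCycle a b c = threeCycle b c a := by
  ext x
  simp only [threeCycle, Perm.mul_apply, swap_apply_def]
  split_ifs <;> simp_all

theorem threeCycle_inv (hab : a ≠ b) (hac : a ≠ c) (hbc : b ≠ c) :
    (threeCycle a b c)⁻¹ = threeCycle a c b := by
  rw [threeCycle_rotate hac hab hbc.symm, threeCycle, threeCycle, mul_inv_rev, swap_inv, swap_inv,
    swap_comm c b, swap_comm b a]

theorem support_threeCycle [Fintype α] (hab : a ≠ b) (hac : a ≠ c) (hbc : b ≠ c) :
    (threeCycle a b c).support = {a, b, c} :=
  Perm.support_swap_mul_swap (by simp [*])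

theorem card_support_threeCycle [Fintype α] (hab : a ≠ b) (hac : a ≠ c) (hbc : b ≠ c) :
    #(threeCycle a b c).support = 3 := by
  rw [support_threeCycle hab hac hbc, card_eq_three]
  exact ⟨a, b, c, hab, hac, hbc, rfl⟩

theorem eq_threeCycle_of_support_eq [Fintype α] {σ : Perm α} (hab : a ≠ b) (hac : a ≠ c)
    (hbc : b ≠ c) (hσ : σ.support = {a, b, c}) (ha : σ a = b) : σ = threeCycle a b c := by
  have hmem : ∀ y, y ∈ ({a, b, c} : Finset α) → σ y ∈ ({a, b, c} : Finset α) ∧ σ y ≠ y :=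
    fun y hy => ⟨hσ ▸ Perm.apply_mem_support.mpr (hσ ▸ hy), Perm.mem_support.mp (hσ ▸ hy)⟩
  obtain ⟨hb_mem, hb_ne⟩ := hmem b (by simp)
  obtain ⟨hc_mem, hc_ne⟩ := hmem c (by simp)
  have hcb : σ c ≠ b := fun h => hac (σ.injective (ha.trans h.symm))
  have hc : σ c = a := by simpa [hcb, hc_ne] using hc_mem
  have hb : σ b = c := by
    have hba : σ b ≠ a := fun h => hbc (σ.injective (h.trans hc.symm))
    simpa [hba, hb_ne] using hb_mem
  ext y
  by_cases hy : y ∈ ({a, b, c} : Finset α)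
  · simp only [mem_insert, mem_singleton] at hy
    rcases hy with rfl | rfl | rfl
    · rw [ha, threeCycle_apply_left hab hac]
    · rw [hb, threeCycle_apply_mid hac hbc]
    · rw [hc, threeCycle_apply_right]
  · simp only [mem_insert, mem_singleton, not_or] at hy
    rw [Perm.notMem_support.mp (hσ ▸ by simp [hy]), threeCycle_apply_of_ne hy.1 hy.2.1 hy.2.2]

theorem eq_threeCycle_or_eq_threeCycle [Fintype α] {σ : Perm α} (hab : a ≠ b) (hac : a ≠ c)
    (hbc : b ≠ c) (hσ : σ.support = {a, b, c}) :
    σ = threeCycle a b c ∨ σ = threeCycle a c b := by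
  have ha : σ a ∈ ({a, b, c} : Finset α) := hσ ▸ Perm.apply_mem_support.mpr (by simp [hσ])
  have ha' : σ a ≠ a := Perm.mem_support.mp (by simp [hσ])
  simp only [mem_insert, mem_singleton, ha', false_or] at ha
  rcases ha with ha | ha
  · exact .inl (eq_threeCycle_of_support_eq hab hac hbc hσ ha)
  · refine .inr (eq_threeCycle_of_support_eq hac hab hbc.symm ?_ ha)
    rw [hσ, pair_comm b c]

theorem exists_eq_swap_of_mem_support [Fintype α] {σ : Perm α} (hσ : σ.IsSwap)
    (hp : p ∈ σ.support) : ∃ x, x ≠ p ∧ σ = swap p x := by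
  obtain ⟨u, v, huv, rfl⟩ := hσ
  rw [Perm.support_swap huv, mem_insert, mem_singleton] at hp
  rcases hp with rfl | rfl
  · exact ⟨v, huv.symm, rfl⟩
  · exact ⟨u, huv, swap_comm u p⟩

theorem eq_of_mem_support_swap [Fintype α] (h : x ∈ (swap p q).support) (hxp : x ≠ p) :
    x = q := by
  by_contra hxq
  exact Perm.mem_support.mp h (swap_apply_of_ne_of_ne hxp hxq)

theorem eq_swap_of_mem_support [Fintype α] {σ : Perm α} (hσ : σ.IsSwap) (hp : p ∈ σ.support)
    (hq : q ∈ σ.support) (hpq : p ≠ q) : σ = swap p q := by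
  obtain ⟨x, -, rfl⟩ := exists_eq_swap_of_mem_support hσ hp
  rw [eq_of_mem_support_swap hq hpq.symm]

theorem four_le_card_support_union [Fintype α] {σ₁ σ₂ σ₃ : Perm α}
    (h₁ : σ₁.IsSwap) (h₂ : σ₂.IsSwap) (h₃ : σ₃.IsSwap)
    (h₁₂ : σ₁ ≠ σ₂) (h₁₃ : σ₁ ≠ σ₃) (h₂₃ : σ₂ ≠ σ₃)
    (hp₁ : p ∈ σ₁.support) (hp₂ : p ∈ σ₂.support) (hp₃ : p ∈ σ₃.support) :
    4 ≤ #(σ₁.support ∪ σ₂.support ∪ σ₃.support) := by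
  obtain ⟨x₁, hx₁, rfl⟩ := exists_eq_swap_of_mem_support h₁ hp₁
  obtain ⟨x₂, hx₂, rfl⟩ := exists_eq_swap_of_mem_support h₂ hp₂
  obtain ⟨x₃, hx₃, rfl⟩ := exists_eq_swap_of_mem_support h₃ hp₃
  have hsub : ({p, x₁, x₂, x₃} : Finset α) ⊆ (swap p x₁).support ∪ (swap p x₂).support ∪
      (swap p x₃).support := by
    simp [Perm.support_swap hx₁.symm, Perm.support_swap hx₂.symm,
      Perm.support_swap hx₃.symm]
  have hcard : #({x₁, x₂, x₃} : Finset α) = 3 :=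
    card_eq_three.mpr ⟨x₁, x₂, x₃, ne_of_apply_ne _ h₁₂, ne_of_apply_ne _ h₁₃,
      ne_of_apply_ne _ h₂₃, rfl⟩
  refine le_trans ?_ (card_le_card hsub)
  rw [card_insert_of_notMem (by simp [hx₁.symm, hx₂.symm, hx₃.symm]), hcard]

end threeCycle

section fin

variable {n : ℕ}

theorem exists_pairwise_ne_of_three_le (hn : 3 ≤ n) :
    ∃ a b c : Fin n, a ≠ b ∧ a ≠ c ∧ b ≠ c :=
  ⟨⟨0, by omega⟩, ⟨1, by omega⟩, ⟨2, by omega⟩, by simp [Fin.ext_iff]⟩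

theorem eq_one_of_swap_apply_apply_eq (hn : 3 ≤ n) {a : Perm (Fin n)}
    (h : ∀ i j, i ≠ j → swap (a i) (a j) = swap i j) : a = 1 := by
  refine Equiv.ext fun i => ?_
  rw [Perm.one_apply]
  by_contra hai
  have hmem : ∀ j, j ≠ i → a i = j := fun j hji => by
    refine eq_of_mem_support_swap (p := i) ?_ hai
    rw [← h i j hji.symm, Perm.support_swap (a.injective.ne hji.symm)]
    exact mem_insert_self _ _
  obtain ⟨j, hji, -⟩ := Fin.exists_ne_and_ne_of_two_lt i i hn
  obtain ⟨k, hki, hkj⟩ := Fin.exists_ne_and_ne_of_two_lt i j hn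
  exact hkj ((hmem k hki).symm.trans (hmem j hji))

theorem equiv_inv_ne_one (hn : 3 ≤ n) : Equiv.inv (Perm (Fin n)) ≠ 1 := by
  intro h
  obtain ⟨a, b, c, hab, hac, hbc⟩ := exists_pairwise_ne_of_three_le hn
  have := congrArg (· a) (DFunLike.congr_fun h (threeCycle a b c))
  simp only [Equiv.inv_apply, Perm.one_apply, threeCycle_inv hab hac hbc,
    threeCycle_apply_left hac hab, threeCycle_apply_left hab hac] at this
  exact hbc this.symm

end fin

section distances

variable {n : ℕ} {i j k l : Fin n}

theorem support_inter_nonempty_of_hdist_lt {σ τ : Perm (Fin n)}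
    (h : hdist σ τ < #σ.support + #τ.support) : (σ.support ∩ τ.support).Nonempty := by
  rw [← card_pos]
  have := card_support_add_card_support_le σ τ
  omega

theorem support_subset_of_hdist_add_card_le {σ τ : Perm (Fin n)}
    (h : hdist σ τ + #τ.support ≤ #σ.support + 1) : τ.support ⊆ σ.support := by
  have hle := card_support_add_card_support_le σ τ
  have hcard : #τ.support ≤ #(σ.support ∩ τ.support) := by omega
  exact inter_eq_right.mp (eq_of_subset_of_card_le inter_subset_right hcard)

theorem hdist_swap_swap (hij : i ≠ j) (hik : i ≠ k) (hjk : j ≠ k) :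
    hdist (swap i j) (swap i k) = 3 := by
  rw [hdist_eq_card_support, swap_inv, swap_comm i k, ← threeCycle,
    card_support_threeCycle hik.symm hjk.symm hij]

theorem hdist_threeCycle_swap (hjk : j ≠ k) : hdist (threeCycle i j k) (swap i j) = 2 := by
  rw [hdist_eq_card_support, threeCycle, swap_inv, ← mul_assoc, swap_mul_self, one_mul,
    Perm.card_support_swap hjk]

theorem hdist_threeCycle_threeCycle (hjk : j ≠ k) (hjl : j ≠ l) (hkl : k ≠ l) :
    hdist (threeCycle i j k) (threeCycle i j l) = 3 := by
  rw [hdist_eq_card_support, threeCycle, threeCycle, mul_inv_rev, swap_inv, swap_inv, mul_assoc,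
    ← mul_assoc (swap i j), swap_mul_self, one_mul, swap_comm j l, ← threeCycle,
    card_support_threeCycle hjl.symm hkl.symm hjk]

theorem four_le_hdist_threeCycle_threeCycle (hij : i ≠ j) (hik : i ≠ k) (hil : i ≠ l)
    (hjk : j ≠ k) (hjl : j ≠ l) (hkl : k ≠ l) :
    4 ≤ hdist (threeCycle i l j) (threeCycle i j k) := by
  have hcard : #({i, j, k, l} : Finset (Fin n)) = 4 := by
    rw [card_insert_of_notMem (by simp [hij, hik, hil]),
      card_eq_three.mpr ⟨j, k, l, hjk, hjl, hkl, rfl⟩]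
  refine hcard ▸ card_le_hdist fun x hx => ?_
  simp only [mem_insert, mem_singleton] at hx
  rcases hx with rfl | rfl | rfl | rfl
  · rw [threeCycle_apply_left hil hij, threeCycle_apply_left hij hik]; exact hjl.symm
  · rw [threeCycle_apply_right, threeCycle_apply_mid hik hjk]; exact hik
  · rw [threeCycle_apply_of_ne hik.symm hkl hjk.symm, threeCycle_apply_right]; exact hik.symm
  · rw [threeCycle_apply_mid hij hjl.symm, threeCycle_apply_of_ne hil.symm hjl.symm hkl.symm]
    exact hjl

end distances

section determination

variable {n : ℕ} {i j k : Fin n}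

theorem hdist_add_sum_support (x σ : Perm (Fin n)) :
    hdist x σ + ∑ p ∈ σ.support, (if x p ≠ p then 1 else 0) =
      hdist x 1 + ∑ p ∈ σ.support, (if x p ≠ σ p then 1 else 0) := by
  have h1 : hdist x 1 = ∑ p ∈ σ.support, (if x p ≠ p then 1 else 0) +
      ∑ p ∈ σ.supportᶜ, (if x p ≠ p then 1 else 0) := by
    rw [sum_add_sum_compl, hdist, card_filter]
    rfl
  have hσ : hdist x σ = ∑ p ∈ σ.support, (if x p ≠ σ p then 1 else 0) +
      ∑ p ∈ σ.supportᶜ, (if x p ≠ p then 1 else 0) := by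
    rw [hdist, card_filter, ← sum_add_sum_compl σ.support]
    congr 1
    exact sum_congr rfl fun p hp => by rw [Perm.notMem_support.mp (mem_compl.mp hp)]
  omega

theorem hdist_swap_add (x : Perm (Fin n)) (hij : i ≠ j) :
    hdist x (swap i j) + ((if x i ≠ i then 1 else 0) + (if x j ≠ j then 1 else 0)) =
      hdist x 1 + ((if x i ≠ j then 1 else 0) + (if x j ≠ i then 1 else 0)) := by
  simpa [Perm.support_swap hij, sum_pair hij] using hdist_add_sum_support x (swap i j)

theorem hdist_threeCycle_add (x : Perm (Fin n)) (hij : i ≠ j) (hik : i ≠ k) (hjk : j ≠ k) :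
    hdist x (threeCycle i j k) + ((if x i ≠ i then 1 else 0) + (if x j ≠ j then 1 else 0) +
      (if x k ≠ k then 1 else 0)) =
    hdist x 1 + ((if x i ≠ j then 1 else 0) + (if x j ≠ k then 1 else 0) +
      (if x k ≠ i then 1 else 0)) := by
  have := hdist_add_sum_support x (threeCycle i j k)
  rw [support_threeCycle hij hik hjk, sum_insert (by simp [hij, hik]), sum_pair hjk,
    sum_insert (by simp [hij, hik]), sum_pair hjk, threeCycle_apply_left hij hik,
    threeCycle_apply_mid hik hjk, threeCycle_apply_right] at this
  omega

theorem apply_eq_self_iff_forall_hdist_lt (x : Perm (Fin n)) (i : Fin n) :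
    x i = i ↔ ∀ j, j ≠ i → hdist x 1 < hdist x (swap i j) := by
  constructor
  · intro hi j hji
    have hxj : x j ≠ i := fun e => hji (x.injective (e.trans hi.symm))
    have e := hdist_swap_add x hji.symm
    simp only [hi, hji.symm, hxj, ne_eq, not_true_eq_false, not_false_eq_true, if_true,
      if_false] at e
    split_ifs at e <;> omega
  · intro h
    by_contra hi
    have hxx : x (x i) ≠ x i := fun e => hi (x.injective e)
    have hlt := h (x i) hi
    have e := hdist_swap_add x (Ne.symm hi)
    simp only [hi, hxx, ne_eq, not_true_eq_false, not_false_eq_true, if_true, if_false] at e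
    split_ifs at e <;> omega

theorem apply_eq_of_hdist_eq {g h : Perm (Fin n)} (H1 : hdist g 1 = hdist h 1)
    (H2 : ∀ i j, i ≠ j → hdist g (swap i j) = hdist h (swap i j))
    (H3 : ∀ i j k, i ≠ j → i ≠ k → j ≠ k →
      hdist g (threeCycle i j k) = hdist h (threeCycle i j k))
    (hg : g i = j) : h i = j := by
  have fixed_iff : ∀ p, g p = p ↔ h p = p := fun p => by
    rw [apply_eq_self_iff_forall_hdist_lt, apply_eq_self_iff_forall_hdist_lt, H1]
    exact forall₂_congr fun q hq => by rw [H2 p q hq.symm]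
  by_cases hji : j = i
  · exact hji ▸ (fixed_iff i).mp (hji ▸ hg)
  have hgj : g j ≠ j := fun e => hji (g.injective (e.trans hg.symm))
  have hhi : h i ≠ i := mt (fixed_iff i).mpr (hg ▸ hji)
  have hhj : h j ≠ j := mt (fixed_iff j).mpr hgj
  by_contra hhij
  have e2g := hdist_swap_add g (Ne.symm hji)
  have e2h := hdist_swap_add h (Ne.symm hji)
  rw [H2 i j (Ne.symm hji), H1] at e2g
  simp only [hg, hji, hgj, hhi, hhj, hhij, ne_eq, not_true_eq_false, not_false_eq_true, if_true,
    if_false] at e2g e2h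
  have hhji : h j = i := by
    by_contra e
    simp only [e, not_false_eq_true, if_true] at e2h
    split_ifs at e2g <;> omega
  have hki : g j ≠ i := by
    intro e
    simp only [e, hhji, not_true_eq_false, if_false] at e2g e2h
    omega
  have hgk : g (g j) ≠ g j := fun e => hgj (g.injective e)
  have hhk : h (g j) ≠ g j := mt (fixed_iff (g j)).mpr hgk
  have hhki : h (g j) ≠ i := fun e => hgj (h.injective (e.trans hhji.symm))
  -- The 3-cycle `(i j (g j))` agrees with `g` at `i` and `j`, and with `h` nowhere on its support.
  have e3g := hdist_threeCycle_add g (Ne.symm hji) (Ne.symm hki) (Ne.symm hgj)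
  have e3h := hdist_threeCycle_add h (Ne.symm hji) (Ne.symm hki) (Ne.symm hgj)
  rw [H3 i j (g j) (Ne.symm hji) (Ne.symm hki) (Ne.symm hgj), H1] at e3g
  simp only [hg, hgj, hhi, hhij, hhji, hgk, hhk, hhki, Ne.symm hji, Ne.symm hki, ne_eq,
    not_true_eq_false, not_false_eq_true, if_true, if_false] at e3g e3h
  split_ifs at e3g <;> omega

theorem eq_of_hdist_eq {g h : Perm (Fin n)} (H1 : hdist g 1 = hdist h 1)
    (H2 : ∀ i j, i ≠ j → hdist g (swap i j) = hdist h (swap i j))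
    (H3 : ∀ i j k, i ≠ j → i ≠ k → j ≠ k →
      hdist g (threeCycle i j k) = hdist h (threeCycle i j k)) : g = h :=
  Equiv.ext fun _ => (apply_eq_of_hdist_eq H1 H2 H3 rfl).symm

end determination

section wreath

variable (G : Type*) [Group G]

def mulLeftRight : G × G →* Perm G where
  toFun p := Equiv.mulLeft p.1 * Equiv.mulRight p.2⁻¹
  map_one' := by ext; simp
  map_mul' p q := by ext; simp [mul_assoc]

@[simp]
theorem mulLeftRight_apply (p : G × G) (φ : G) : mulLeftRight G p φ = p.1 * φ * p.2⁻¹ := by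
  simp [mulLeftRight, mul_assoc]

def invHom : Multiplicative (ZMod 2) →* Perm G where
  toFun k := if k.toAdd = 0 then 1 else Equiv.inv G
  map_one' := by simp
  map_mul' a b := by
    have hsq : Equiv.inv G * Equiv.inv G = 1 := by ext; simp
    have h : ∀ x : ZMod 2, x = 0 ∨ x = 1 := by decide
    rcases h a.toAdd with ha | ha <;> rcases h b.toAdd with hb | hb <;>
      simp [toAdd_mul, ha, hb, hsq, show (1 + 1 : ZMod 2) = 0 from by decide,
        show (1 : ZMod 2) ≠ 0 from by decide]

theorem eq_one_or_eq_ofAdd_one (k : Multiplicative (ZMod 2)) :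
    k = 1 ∨ k = Multiplicative.ofAdd 1 := by
  revert k
  decide

@[simp]
theorem invHom_ofAdd_one : invHom G (Multiplicative.ofAdd 1) = Equiv.inv G := by
  simp [invHom, show (1 : ZMod 2) ≠ 0 from by decide]

theorem swapHom_ofAdd_one (n : ℕ) : swapHom n (Multiplicative.ofAdd 1) = swapFactors n := by
  simp [swapHom, show (1 : ZMod 2) ≠ 0 from by decide]

end wreath

namespace IsoGroup

variable {n : ℕ} {t : Perm (Perm (Fin n))} {i j k l : Fin n}

theorem equiv_inv_mem : Equiv.inv (Perm (Fin n)) ∈ IsoGroup n :=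
  fun φ ψ => hdist_inv_inv φ ψ

theorem mulLeftRight_mem (p : Perm (Fin n) × Perm (Fin n)) :
    mulLeftRight (Perm (Fin n)) p ∈ IsoGroup n := fun φ ψ => by
  simp [hdist_mul_left, hdist_mul_right]

theorem card_support_apply (ht : t ∈ IsoGroup n) (h1 : t 1 = 1) (φ : Perm (Fin n)) :
    #(t φ).support = #φ.support := by
  simpa [hdist_one_right, h1] using ht φ 1

theorem isSwap_apply_swap (ht : t ∈ IsoGroup n) (h1 : t 1 = 1) (hij : i ≠ j) :
    (t (swap i j)).IsSwap :=
  Perm.card_support_eq_two.mp (by rw [card_support_apply ht h1, Perm.card_support_swap hij])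

theorem apply_swap_ne_apply_swap (hjk : j ≠ k) : t (swap i j) ≠ t (swap i k) :=
  t.injective.ne ((swap_injective_of_left i).ne hjk)

theorem support_apply_swap_subset (ht : t ∈ IsoGroup n) (h1 : t 1 = 1) (hij : i ≠ j)
    (hik : i ≠ k) (hjk : j ≠ k) :
    (t (swap i j)).support ⊆ (t (threeCycle i j k)).support := by
  apply support_subset_of_hdist_add_card_le
  rw [ht, hdist_threeCycle_swap hjk, card_support_apply ht h1, card_support_apply ht h1,
    Perm.card_support_swap hij, card_support_threeCycle hij hik hjk]

theorem notMem_support_apply_swap_of_triangle (ht : t ∈ IsoGroup n) (h1 : t 1 = 1)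
    (hij : i ≠ j) (hik : i ≠ k) (hjk : j ≠ k) {p : Fin n} (hp₁ : p ∈ (t (swap i j)).support)
    (hp₂ : p ∈ (t (swap j k)).support) : p ∉ (t (swap k i)).support := by
  intro hp₃
  have hsub : (t (swap i j)).support ∪ (t (swap j k)).support ∪ (t (swap k i)).support ⊆
      (t (threeCycle i j k)).support := by
    refine union_subset (union_subset (support_apply_swap_subset ht h1 hij hik hjk) ?_) ?_
    · rw [threeCycle_rotate hij hik hjk]
      exact support_apply_swap_subset ht h1 hjk hij.symm hik.symm
    · rw [threeCycle_rotate hij hik hjk, threeCycle_rotate hjk hij.symm hik.symm]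
      exact support_apply_swap_subset ht h1 hik.symm hjk.symm hij
  have h4 := four_le_card_support_union (isSwap_apply_swap ht h1 hij)
    (isSwap_apply_swap ht h1 hjk) (isSwap_apply_swap ht h1 hik.symm)
    (by rw [swap_comm i j]; exact apply_swap_ne_apply_swap hik)
    (by rw [swap_comm k i]; exact apply_swap_ne_apply_swap hjk)
    (by rw [swap_comm j k]; exact apply_swap_ne_apply_swap hij.symm)
    hp₁ hp₂ hp₃
  have := card_le_card hsub
  rw [card_support_apply ht h1, card_support_threeCycle hij hik hjk] at this
  omega

theorem exists_mem_support_apply_swap (hn : 3 ≤ n) (ht : t ∈ IsoGroup n) (h1 : t 1 = 1)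
    (i : Fin n) : ∃ p, ∀ j, j ≠ i → p ∈ (t (swap i j)).support := by
  have meet : ∀ {j l}, j ≠ i → l ≠ i → j ≠ l →
      ((t (swap i j)).support ∩ (t (swap i l)).support).Nonempty := fun hji hli hjl =>
    support_inter_nonempty_of_hdist_lt (by
      rw [ht, hdist_swap_swap hji.symm hli.symm hjl, card_support_apply ht h1,
        card_support_apply ht h1, Perm.card_support_swap hji.symm,
        Perm.card_support_swap hli.symm]
      norm_num)
  obtain ⟨j, hji, -⟩ := Fin.exists_ne_and_ne_of_two_lt i i hn
  obtain ⟨k, hki, hkj⟩ := Fin.exists_ne_and_ne_of_two_lt i j hn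
  obtain ⟨p, hp⟩ := meet hji hki hkj.symm
  rw [mem_inter] at hp
  refine ⟨p, fun l hli => ?_⟩
  by_cases hlj : l = j
  · exact hlj ▸ hp.1
  by_cases hlk : l = k
  · exact hlk ▸ hp.2
  by_contra hpl
  -- Then `t (swap i l) = swap q r`, and `t⁻¹` maps the triangle `(p q), (q r), (r p)` to
  -- transpositions through `i`.
  obtain ⟨q, hqp, hq⟩ := exists_eq_swap_of_mem_support (isSwap_apply_swap ht h1 hji.symm) hp.1
  obtain ⟨r, hrp, hr⟩ := exists_eq_swap_of_mem_support (isSwap_apply_swap ht h1 hki.symm) hp.2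
  have other_mem : ∀ {m y}, m ≠ i → m ≠ l → t (swap i m) = swap p y →
      y ∈ (t (swap i l)).support := fun hmi hml hm => by
    obtain ⟨x, hx⟩ := meet hmi hli hml
    rw [mem_inter, hm] at hx
    exact eq_of_mem_support_swap hx.1 (fun hxp => hpl (hxp ▸ hx.2)) ▸ hx.2
  have hqr : q ≠ r := fun h => apply_swap_ne_apply_swap hkj.symm (hq.trans (h ▸ hr.symm))
  have hl : t (swap i l) = swap q r := eq_swap_of_mem_support (isSwap_apply_swap ht h1 hli.symm)
    (other_mem hji (Ne.symm hlj) hq) (other_mem hki (Ne.symm hlk) hr) hqr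
  have hi : ∀ {m}, m ≠ i → i ∈ (swap i m).support := fun hmi => by
    simp [Perm.support_swap hmi.symm]
  refine notMem_support_apply_swap_of_triangle (inv_mem ht) (by rw [Perm.inv_eq_iff_eq, h1])
    hqp.symm hrp.symm hqr (p := i) ?_ ?_ ?_
  · rw [Perm.inv_eq_iff_eq.mpr hq.symm]; exact hi hji
  · rw [Perm.inv_eq_iff_eq.mpr hl.symm]; exact hi hli
  · rw [swap_comm, Perm.inv_eq_iff_eq.mpr hr.symm]; exact hi hki

theorem exists_apply_swap_eq_swap (hn : 3 ≤ n) (ht : t ∈ IsoGroup n) (h1 : t 1 = 1) :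
    ∃ a : Perm (Fin n), ∀ i j, i ≠ j → t (swap i j) = swap (a i) (a j) := by
  choose a ha using exists_mem_support_apply_swap hn ht h1
  have hinj : Function.Injective a := by
    intro i i' he
    by_contra hii'
    obtain ⟨k, hki, hki'⟩ := Fin.exists_ne_and_ne_of_two_lt i i' hn
    refine notMem_support_apply_swap_of_triangle ht h1 hii' hki.symm hki'.symm
      (ha i i' (Ne.symm hii')) (he ▸ ha i' k hki') ?_
    rw [swap_comm]
    exact ha i k hki
  refine ⟨Equiv.ofBijective a hinj.bijective_of_finite, fun i j hij => ?_⟩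
  exact eq_swap_of_mem_support (isSwap_apply_swap ht h1 hij) (ha i j hij.symm)
    (swap_comm i j ▸ ha j i hij) (hinj.ne hij)

theorem apply_threeCycle_eq_or (ht : t ∈ IsoGroup n) (h1 : t 1 = 1)
    (hsw : ∀ i j, i ≠ j → t (swap i j) = swap i j) (hij : i ≠ j) (hik : i ≠ k) (hjk : j ≠ k) :
    t (threeCycle i j k) = threeCycle i j k ∨ t (threeCycle i j k) = threeCycle i k j := by
  refine eq_threeCycle_or_eq_threeCycle hij hik hjk (eq_of_subset_of_card_le ?_ ?_).symm
  · have hsub_ij := support_apply_swap_subset ht h1 hij hik hjk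
    have hsub_jk := support_apply_swap_subset ht h1 hjk hij.symm hik.symm
    rw [hsw i j hij, Perm.support_swap hij] at hsub_ij
    rw [hsw j k hjk, Perm.support_swap hjk, ← threeCycle_rotate hij hik hjk] at hsub_jk
    intro x hx
    simp only [mem_insert, mem_singleton] at hx
    rcases hx with rfl | rfl | rfl
    · exact hsub_ij (by simp)
    · exact hsub_ij (by simp)
    · exact hsub_jk (by simp)
  · rw [card_support_apply ht h1, support_threeCycle hij hik hjk]

theorem apply_threeCycle_swap_eq (ht : t ∈ IsoGroup n) (h1 : t 1 = 1)
    (hsw : ∀ i j, i ≠ j → t (swap i j) = swap i j) (hij : i ≠ j) (hik : i ≠ k) (hjk : j ≠ k)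
    (hfix : t (threeCycle i j k) = threeCycle i j k) :
    t (threeCycle i k j) = threeCycle i k j := by
  refine (apply_threeCycle_eq_or ht h1 hsw hik hij hjk.symm).resolve_right fun h => hjk ?_
  have := congrArg (· i) (t.injective (h.trans hfix.symm))
  simpa [threeCycle_apply_left hik hij, threeCycle_apply_left hij hik] using this.symm

theorem apply_threeCycle_eq_of_apply_threeCycle_eq (ht : t ∈ IsoGroup n) (h1 : t 1 = 1)
    (hsw : ∀ i j, i ≠ j → t (swap i j) = swap i j) (hij : i ≠ j) (hik : i ≠ k) (hjk : j ≠ k)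
    (hfix : t (threeCycle i j k) = threeCycle i j k) (hli : l ≠ i) (hlj : l ≠ j) :
    t (threeCycle i j l) = threeCycle i j l := by
  rcases eq_or_ne l k with rfl | hlk
  · exact hfix
  refine (apply_threeCycle_eq_or ht h1 hsw hij hli.symm hlj.symm).resolve_right fun h => ?_
  have h3 := ht (threeCycle i j l) (threeCycle i j k)
  rw [h, hfix, hdist_threeCycle_threeCycle hlj.symm hjk hlk] at h3
  have := four_le_hdist_threeCycle_threeCycle hij hik hli.symm hjk hlj.symm hlk.symm
  omega

theorem apply_threeCycle_eq_self (hn : 3 ≤ n) (ht : t ∈ IsoGroup n) (h1 : t 1 = 1)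
    (hsw : ∀ i j, i ≠ j → t (swap i j) = swap i j) {a b c : Fin n} (hab : a ≠ b) (hac : a ≠ c)
    (hbc : b ≠ c) (hfix : t (threeCycle a b c) = threeCycle a b c) (hij : i ≠ j) (hik : i ≠ k)
    (hjk : j ≠ k) : t (threeCycle i j k) = threeCycle i j k := by
  -- `Fixes a b` passes from `(a, b)` to `(b, a)` and to `(a, c)`, hence to every pair.
  let Fixes (a b : Fin n) : Prop := ∀ c, c ≠ a → c ≠ b → t (threeCycle a b c) = threeCycle a b c
  have extend : ∀ {a b c}, a ≠ b → a ≠ c → b ≠ c → t (threeCycle a b c) = threeCycle a b c →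
      Fixes a b := fun hab hac hbc hfix _ hda hdb =>
    apply_threeCycle_eq_of_apply_threeCycle_eq ht h1 hsw hab hac hbc hfix hda hdb
  have fixes_symm : ∀ {a b}, a ≠ b → Fixes a b → Fixes b a := by
    intro a b hab hG
    obtain ⟨c, hca, hcb⟩ := Fin.exists_ne_and_ne_of_two_lt a b hn
    have := apply_threeCycle_swap_eq ht h1 hsw hab hca.symm hcb.symm (hG c hca hcb)
    rw [threeCycle_rotate hca.symm hab hcb, threeCycle_rotate hcb hca hab.symm] at this
    exact extend hab.symm hcb.symm hca.symm this
  have fixes_right : ∀ {a b c}, a ≠ b → c ≠ a → Fixes a b → Fixes a c := by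
    intro a b c hab hca hG
    rcases eq_or_ne c b with rfl | hcb
    · exact hG
    have := hG c hca hcb
    rw [threeCycle_rotate hab hca.symm hcb.symm, threeCycle_rotate hcb.symm hab.symm hca] at this
    exact fixes_symm hca (extend hca hcb hab this)
  have hba := fixes_symm hab (extend hab hac hbc hfix)
  have hij_fix : Fixes i j := by
    rcases eq_or_ne i b with rfl | hib
    · exact fixes_right hab.symm hij.symm hba
    · exact fixes_right hib hij.symm (fixes_symm hib.symm (fixes_right hab.symm hib hba))
  exact hij_fix k hik.symm hjk.symm

theorem eq_one_of_apply_threeCycle_eq (hn : 3 ≤ n) (ht : t ∈ IsoGroup n) (h1 : t 1 = 1)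
    (hsw : ∀ i j, i ≠ j → t (swap i j) = swap i j) {a b c : Fin n} (hab : a ≠ b) (hac : a ≠ c)
    (hbc : b ≠ c) (hfix : t (threeCycle a b c) = threeCycle a b c) : t = 1 := by
  refine Equiv.ext fun φ => ?_
  rw [Perm.one_apply]
  refine eq_of_hdist_eq ?_ (fun i j hij => ?_) (fun i j k hij hik hjk => ?_)
  · rw [← h1, ht, h1]
  · rw [← hsw i j hij, ht, hsw i j hij]
  · rw [← apply_threeCycle_eq_self hn ht h1 hsw hab hac hbc hfix hij hik hjk, ht,
      apply_threeCycle_eq_self hn ht h1 hsw hab hac hbc hfix hij hik hjk]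

theorem eq_one_or_eq_inv (hn : 3 ≤ n) (ht : t ∈ IsoGroup n) (h1 : t 1 = 1)
    (hsw : ∀ i j, i ≠ j → t (swap i j) = swap i j) : t = 1 ∨ t = Equiv.inv (Perm (Fin n)) := by
  obtain ⟨a, b, c, hab, hac, hbc⟩ := exists_pairwise_ne_of_three_le hn
  rcases apply_threeCycle_eq_or ht h1 hsw hab hac hbc with h | h
  · exact .inl (eq_one_of_apply_threeCycle_eq hn ht h1 hsw hab hac hbc h)
  refine .inr (mul_eq_one_iff_eq_inv.mp (eq_one_of_apply_threeCycle_eq hn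
    (mul_mem ht equiv_inv_mem) (by simp [h1]) (fun i j hij => by simp [hsw i j hij])
    hac hab hbc.symm ?_))
  rw [Perm.mul_apply, Equiv.inv_apply, threeCycle_inv hac hab hbc.symm, h]

end IsoGroup

section isoHom

variable {n : ℕ}

theorem mulLeftRight_comp_swapHom (k : Multiplicative (ZMod 2)) :
    (mulLeftRight (Perm (Fin n))).comp (swapHom n k).toMonoidHom =
      (MulAut.conj (invHom (Perm (Fin n)) k)).toMonoidHom.comp (mulLeftRight (Perm (Fin n))) := by
  rcases eq_one_or_eq_ofAdd_one k with rfl | rfl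
  · ext : 2
    simp
  · ext p φ : 2
    simp [swapHom_ofAdd_one, swapFactors, mul_assoc]

variable (n) in
/-- The action of `Sym(n) ≀ 2` on `Sym(n)`: `((a, b), k)` acts as `φ ↦ a * φ^(±1) * b⁻¹`. -/
def isoHom : SemidirectProduct (Perm (Fin n) × Perm (Fin n)) (Multiplicative (ZMod 2))
    (swapHom n) →* Perm (Perm (Fin n)) :=
  SemidirectProduct.lift _ _ mulLeftRight_comp_swapHom

theorem isoHom_apply (x) : isoHom n x = mulLeftRight _ x.left * invHom _ x.right := rfl

theorem range_isoHom_le : (isoHom n).range ≤ IsoGroup n := by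
  rintro _ ⟨x, rfl⟩
  rw [isoHom_apply]
  refine mul_mem (IsoGroup.mulLeftRight_mem x.left) ?_
  rcases eq_one_or_eq_ofAdd_one x.right with h | h <;> rw [h]
  · exact (map_one (invHom (Perm (Fin n)))).symm ▸ one_mem _
  · exact (invHom_ofAdd_one (Perm (Fin n))).symm ▸ IsoGroup.equiv_inv_mem

theorem isoGroup_le_range_isoHom (hn : 3 ≤ n) : IsoGroup n ≤ (isoHom n).range := by
  have lr_mem : ∀ p, mulLeftRight _ p ∈ (isoHom n).range := fun p =>
    ⟨SemidirectProduct.inl p, SemidirectProduct.lift_inl _ _ _ p⟩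
  have inv_mem : Equiv.inv _ ∈ (isoHom n).range :=
    ⟨SemidirectProduct.inr (Multiplicative.ofAdd 1),
      (SemidirectProduct.lift_inr _ _ _ _).trans (invHom_ofAdd_one _)⟩
  intro t ht
  set u := mulLeftRight _ ((t 1)⁻¹, 1) * t
  have hu_mem : u ∈ IsoGroup n := mul_mem (IsoGroup.mulLeftRight_mem _) ht
  obtain ⟨a, ha⟩ := IsoGroup.exists_apply_swap_eq_swap hn hu_mem (by simp [u])
  set v := mulLeftRight _ (a⁻¹, a⁻¹) * u
  have hv_mem : v ∈ IsoGroup n := mul_mem (IsoGroup.mulLeftRight_mem _) hu_mem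
  have hvsw : ∀ i j, i ≠ j → v (swap i j) = swap i j := fun i j hij => by
    simp only [v, Perm.mul_apply, ha i j hij, mulLeftRight_apply, swap_apply_apply, inv_inv]
    group
  have hv_range : v ∈ (isoHom n).range := by
    rcases IsoGroup.eq_one_or_eq_inv hn hv_mem (by simp [v, u]) hvsw with h | h
    · exact h ▸ one_mem _
    · exact h ▸ inv_mem
  have ht_eq : t = mulLeftRight _ (t 1, 1) * (mulLeftRight _ (a, a) * v) := by
    simp [v, u, ← mul_assoc, ← map_mul, ← Prod.one_eq_mk]
  rw [ht_eq]
  exact mul_mem (lr_mem _) (mul_mem (lr_mem _) hv_range)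

theorem isoHom_injective (hn : 3 ≤ n) : Function.Injective (isoHom n) := by
  refine (injective_iff_map_eq_one _).mpr fun ⟨⟨a, b⟩, k⟩ hx => ?_
  have hfix : ∀ φ : Perm (Fin n), φ⁻¹ = φ → invHom _ k φ = φ := by
    rcases eq_one_or_eq_ofAdd_one k with rfl | rfl <;> simp
  have hφ : ∀ φ : Perm (Fin n), φ⁻¹ = φ → a * φ * b⁻¹ = φ := fun φ hφ => by
    simpa [isoHom_apply, hfix φ hφ] using DFunLike.congr_fun hx φ
  obtain rfl : a = b := mul_inv_eq_one.mp (by simpa using hφ 1 inv_one)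
  obtain rfl : a = 1 := eq_one_of_swap_apply_apply_eq hn fun i j _ => by
    rw [swap_apply_apply, hφ _ (swap_inv i j)]
  have hk : invHom (Perm (Fin n)) k = 1 := by simpa [isoHom_apply, ← Prod.one_eq_mk] using hx
  rcases eq_one_or_eq_ofAdd_one k with rfl | rfl
  · rfl
  · exact absurd (invHom_ofAdd_one (Perm (Fin n)) ▸ hk) (equiv_inv_ne_one hn)

end isoHom

/-- For `n ≥ 3`, the isometry group of `(Sym(n), d_H)` is isomorphic to the semidirect
product `(Sym(n) × Sym(n)) ⋊ Z/2Z`, the nontrivial element of `Z/2Z` acting by swapping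
the two factors (i.e. the wreath product `Sym(n) ≀ 2`). -/
theorem isometry_group_iso_semidirect (n : ℕ) (hn : 3 ≤ n) :
    Nonempty (IsoGroup n ≃*
      SemidirectProduct (Equiv.Perm (Fin n) × Equiv.Perm (Fin n))
        (Multiplicative (ZMod 2)) (swapHom n)) :=
  ⟨((MonoidHom.ofInjective (isoHom_injective hn)).trans (MulEquiv.subgroupCongr
    (le_antisymm range_isoHom_le (isoGroup_le_range_isoHom hn)))).symm⟩
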